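/- Let F₂ be the free group on x and y and let k ≥ 2. Define αₛ = (y⁻¹x⁻¹)^{s-1} y³ x^{s-1} for s = 1, ..., k. Then α₁, ..., α_k form a free basis of a free subgroup of F₂ of rank k. -/
import Mathlib


/-!
Statement 14: for `k ≥ 2`, the elements `αₛ = (y⁻¹x⁻¹)^{s-1} y³ x^{s-1}`, `s = 1, …, k`,
form a free basis of a free subgroup of rank `k` of the free group `F₂` on `x, y`.
Expressed via injectivity of the lift `FreeGroup (Fin k) →* F₂`, index `i ↦ s = i + 1`.
-/

namespace Stmt14

abbrev F2 := FreeGroup (Fin 2)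

def x : F2 := FreeGroup.of 0
def y : F2 := FreeGroup.of 1

def α (s : ℕ) : F2 := (y⁻¹ * x⁻¹) ^ (s - 1) * y ^ 3 * x ^ (s - 1)

/-! ### Auxiliary development -/

abbrev xp : Fin 2 × Bool := (0, true)
abbrev xm : Fin 2 × Bool := (0, false)
abbrev yp : Fin 2 × Bool := (1, true)
abbrev ym : Fin 2 × Bool := (1, false)

/-- `av n = (y⁻¹x⁻¹)^n y³ x^n`. -/
def av (n : ℕ) : F2 := (y⁻¹ * x⁻¹) ^ n * y ^ 3 * x ^ n

lemma av_succ (n : ℕ) : av (n + 1) = y⁻¹ * (x⁻¹ * av n * x) := by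
  unfold av
  rw [pow_succ' (y⁻¹ * x⁻¹), pow_succ x]
  group

/-- The prefix pattern defining the set `X n`. -/
def Pw : ℕ → List (Fin 2 × Bool)
  | 0 => [yp]
  | n + 1 => ym :: xm :: Pw n

/-- Auxiliary tail pattern `x⁻ⁿ y⁻¹`. -/
def Qt (n : ℕ) : List (Fin 2 × Bool) := List.replicate n xm ++ [ym]

/-- The prefix pattern defining the set `Y n`. -/
def Qw : ℕ → List (Fin 2 × Bool)
  | 0 => [ym, ym]
  | n + 1 => xm :: Qt n

lemma Qt_succ (n : ℕ) : Qt (n + 1) = xm :: Qt n := by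
  simp [Qt, List.replicate_succ]

lemma Qt_prefix_Qw (n : ℕ) : Qt n <+: Qw n := by
  cases n with
  | zero => exact ⟨[ym], rfl⟩
  | succ n => rw [Qt_succ]; exact ⟨[], by simp [Qw]⟩

/-! ### Single letter multiplication -/

lemma letter_mul_toWord (a : Fin 2) (b : Bool) (g : F2) :
    (FreeGroup.mk [(a, b)] * g).toWord = FreeGroup.reduce ((a, b) :: g.toWord) := by
  conv_lhs => rw [← FreeGroup.mk_toWord (x := g), FreeGroup.mul_mk]
  rw [FreeGroup.toWord_mk]
  rfl

lemma letter_mul_cancel (a : Fin 2) (b : Bool) (g : F2) {tl : List (Fin 2 × Bool)}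
    (h : g.toWord = (a, !b) :: tl) :
    (FreeGroup.mk [(a, b)] * g).toWord = tl := by
  have hred : FreeGroup.reduce ((a, !b) :: tl) = (a, !b) :: tl := by
    rw [← h, FreeGroup.reduce_toWord]
  rw [letter_mul_toWord, h, FreeGroup.reduce.cons, hred]
  simp

lemma letter_mul_cons (a : Fin 2) (b : Bool) (g : F2)
    (h : g.toWord.head? ≠ some (a, !b)) :
    (FreeGroup.mk [(a, b)] * g).toWord = (a, b) :: g.toWord := by
  rw [letter_mul_toWord, FreeGroup.reduce.cons, FreeGroup.reduce_toWord]
  cases hg : g.toWord with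
  | nil => rfl
  | cons hd tl =>
    have hne : ¬ ((a, b).1 = hd.1 ∧ (a, b).2 = !hd.2) := by
      rintro ⟨h1, h2⟩
      apply h
      rw [hg]
      have : hd = (a, !b) := by
        obtain ⟨c, d⟩ := hd
        simp only at h1 h2
        subst h1
        simp [h2]
      rw [this]
      rfl
    simp only [hne, if_false]

lemma x_mk : x = FreeGroup.mk [xp] := rfl
lemma y_mk : y = FreeGroup.mk [yp] := rfl
lemma xinv_mk : x⁻¹ = FreeGroup.mk [xm] := by
  rw [x_mk, FreeGroup.inv_mk]; rfl
lemma yinv_mk : y⁻¹ = FreeGroup.mk [ym] := by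
  rw [y_mk, FreeGroup.inv_mk]; rfl

lemma x_mul_cancel (g : F2) {tl} (h : g.toWord = xm :: tl) : (x * g).toWord = tl := by
  rw [x_mk]; exact letter_mul_cancel 0 true g h
lemma x_mul_cons (g : F2) (h : g.toWord.head? ≠ some xm) :
    (x * g).toWord = xp :: g.toWord := by
  rw [x_mk]; exact letter_mul_cons 0 true g h
lemma y_mul_cancel (g : F2) {tl} (h : g.toWord = ym :: tl) : (y * g).toWord = tl := by
  rw [y_mk]; exact letter_mul_cancel 1 true g h
lemma y_mul_cons (g : F2) (h : g.toWord.head? ≠ some ym) :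
    (y * g).toWord = yp :: g.toWord := by
  rw [y_mk]; exact letter_mul_cons 1 true g h
lemma xinv_mul_cancel (g : F2) {tl} (h : g.toWord = xp :: tl) : (x⁻¹ * g).toWord = tl := by
  rw [xinv_mk]; exact letter_mul_cancel 0 false g h
lemma xinv_mul_cons (g : F2) (h : g.toWord.head? ≠ some xp) :
    (x⁻¹ * g).toWord = xm :: g.toWord := by
  rw [xinv_mk]; exact letter_mul_cons 0 false g h
lemma yinv_mul_cancel (g : F2) {tl} (h : g.toWord = yp :: tl) : (y⁻¹ * g).toWord = tl := by
  rw [yinv_mk]; exact letter_mul_cancel 1 false g h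
lemma yinv_mul_cons (g : F2) (h : g.toWord.head? ≠ some yp) :
    (y⁻¹ * g).toWord = ym :: g.toWord := by
  rw [yinv_mk]; exact letter_mul_cons 1 false g h

lemma head?_of_prefix {c : Fin 2 × Bool} {p l : List (Fin 2 × Bool)}
    (h : c :: p <+: l) : l.head? = some c := by
  obtain ⟨t, rfl⟩ := h
  rfl

lemma head?_of_P {n : ℕ} {l : List (Fin 2 × Bool)} (h : Pw n <+: l) :
    l.head? = some yp ∨ l.head? = some ym := by
  cases n with
  | zero => exact Or.inl (head?_of_prefix h)
  | succ n => exact Or.inr (head?_of_prefix h)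

lemma head?_of_Q {n : ℕ} {l : List (Fin 2 × Bool)} (h : Qw n <+: l) :
    l.head? = some ym ∨ l.head? = some xm := by
  cases n with
  | zero => exact Or.inl (head?_of_prefix h)
  | succ n => exact Or.inr (head?_of_prefix h)

/-! ### The two ping-pong inclusions -/

lemma claimA : ∀ (n : ℕ) (g : F2), ¬ (Qw n <+: g.toWord) → Pw n <+: (av n * g).toWord := by
  intro n
  induction n with
  | zero =>
    intro g hg
    have hav : av 0 * g = y * (y * (y * g)) := by
      unfold av; rw [pow_succ, pow_succ, pow_one, pow_zero]; group
    rw [hav]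
    by_cases h1 : g.toWord.head? = some ym
    · -- g starts with y⁻¹, but not with y⁻² (by hg)
      obtain ⟨tl, htl⟩ : ∃ tl, g.toWord = ym :: tl := by
        cases hgw : g.toWord with
        | nil => rw [hgw] at h1; simp at h1
        | cons hd t => rw [hgw] at h1; simp at h1; exact ⟨t, by rw [h1]⟩
      have h2 : (y * g).toWord = tl := y_mul_cancel g htl
      have h3 : tl.head? ≠ some ym := by
        intro hc
        apply hg
        cases htl2 : tl with
        | nil => rw [htl2] at hc; simp at hc
        | cons hd t =>
          rw [htl2] at hc; simp at hc
          rw [htl, htl2, hc]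
          exact ⟨t, rfl⟩
      have h4 : (y * (y * g)).toWord = yp :: tl := by
        rw [y_mul_cons (y * g) (by rw [h2]; exact h3)]
        rw [h2]
      have h5 : (y * (y * (y * g))).toWord = yp :: yp :: tl := by
        rw [y_mul_cons _ (by rw [h4]; simp)]
        rw [h4]
      rw [h5]
      exact ⟨yp :: tl, rfl⟩
    · have h2 : (y * g).toWord = yp :: g.toWord := y_mul_cons g h1
      have h3 : (y * (y * g)).toWord = yp :: yp :: g.toWord := by
        rw [y_mul_cons _ (by rw [h2]; simp)]
        rw [h2]
      have h4 : (y * (y * (y * g))).toWord = yp :: yp :: yp :: g.toWord := by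
        rw [y_mul_cons _ (by rw [h3]; simp)]
        rw [h3]
      rw [h4]
      exact ⟨yp :: yp :: g.toWord, rfl⟩
  | succ n ih =>
    intro g hg
    rw [av_succ]
    have key : Pw n <+: (av n * (x * g)).toWord := by
      apply ih
      by_cases h1 : g.toWord.head? = some xm
      · obtain ⟨tl, htl⟩ : ∃ tl, g.toWord = xm :: tl := by
          cases hgw : g.toWord with
          | nil => rw [hgw] at h1; simp at h1
          | cons hd t => rw [hgw] at h1; simp at h1; exact ⟨t, by rw [h1]⟩
        rw [x_mul_cancel g htl]
        intro hc
        apply hg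
        rw [htl]
        show Qw (n + 1) <+: xm :: tl
        rw [show Qw (n + 1) = xm :: Qt n from rfl]
        exact List.cons_prefix_cons.mpr ⟨rfl, (Qt_prefix_Qw n).trans hc⟩
      · rw [x_mul_cons g h1]
        intro hc
        rcases head?_of_Q hc with h | h <;> simp at h
    have hw : (x⁻¹ * (av n * (x * g))).toWord = xm :: (av n * (x * g)).toWord := by
      apply xinv_mul_cons
      rcases head?_of_P key with h | h <;> rw [h] <;> simp
    have hw2 : (y⁻¹ * (x⁻¹ * (av n * (x * g)))).toWord
        = ym :: xm :: (av n * (x * g)).toWord := by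
      rw [yinv_mul_cons _ (by rw [hw]; simp), hw]
    have heq : y⁻¹ * (x⁻¹ * av n * x) * g = y⁻¹ * (x⁻¹ * (av n * (x * g))) := by group
    rw [heq, hw2]
    show ym :: xm :: Pw n <+: ym :: xm :: (av n * (x * g)).toWord
    exact List.cons_prefix_cons.mpr ⟨rfl, List.cons_prefix_cons.mpr ⟨rfl, key⟩⟩

lemma claimB : ∀ (n : ℕ) (g : F2), ¬ (Pw n <+: g.toWord) → Qw n <+: ((av n)⁻¹ * g).toWord := by
  intro n
  induction n with
  | zero =>
    intro g hg
    have hav : (av 0)⁻¹ * g = y⁻¹ * (y⁻¹ * (y⁻¹ * g)) := by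
      unfold av; rw [pow_succ, pow_succ, pow_one, pow_zero]; group
    rw [hav]
    have h1 : g.toWord.head? ≠ some yp := by
      intro hc
      apply hg
      cases hgw : g.toWord with
      | nil => rw [hgw] at hc; simp at hc
      | cons hd t =>
        rw [hgw] at hc; simp at hc
        rw [hc]
        exact ⟨t, rfl⟩
    have h2 : (y⁻¹ * g).toWord = ym :: g.toWord := yinv_mul_cons g h1
    have h3 : (y⁻¹ * (y⁻¹ * g)).toWord = ym :: ym :: g.toWord := by
      rw [yinv_mul_cons _ (by rw [h2]; simp), h2]
    have h4 : (y⁻¹ * (y⁻¹ * (y⁻¹ * g))).toWord = ym :: ym :: ym :: g.toWord := by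
      rw [yinv_mul_cons _ (by rw [h3]; simp), h3]
    rw [h4]
    exact ⟨ym :: g.toWord, rfl⟩
  | succ n ih =>
    intro g hg
    have heq : (av (n + 1))⁻¹ * g = x⁻¹ * ((av n)⁻¹ * (x * (y * g))) := by
      rw [av_succ]; group
    rw [heq]
    have key : Qw n <+: ((av n)⁻¹ * (x * (y * g))).toWord := by
      apply ih
      by_cases h1 : g.toWord.head? = some ym
      · obtain ⟨tl, htl⟩ : ∃ tl, g.toWord = ym :: tl := by
          cases hgw : g.toWord with
          | nil => rw [hgw] at h1; simp at h1
          | cons hd t => rw [hgw] at h1; simp at h1; exact ⟨t, by rw [h1]⟩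
        have h2 : (y * g).toWord = tl := y_mul_cancel g htl
        by_cases h3 : tl.head? = some xm
        · obtain ⟨tl2, htl2⟩ : ∃ tl2, tl = xm :: tl2 := by
            cases htw : tl with
            | nil => rw [htw] at h3; simp at h3
            | cons hd t => rw [htw] at h3; simp at h3; exact ⟨t, by rw [h3]⟩
          rw [x_mul_cancel (y * g) (by rw [h2, htl2])]
          intro hc
          apply hg
          rw [htl, htl2]
          show ym :: xm :: Pw n <+: ym :: xm :: tl2
          exact List.cons_prefix_cons.mpr ⟨rfl, List.cons_prefix_cons.mpr ⟨rfl, hc⟩⟩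
        · rw [x_mul_cons (y * g) (by rw [h2]; exact h3)]
          intro hc
          rcases head?_of_P hc with h | h <;> simp at h
      · have h2 : (y * g).toWord = yp :: g.toWord := y_mul_cons g h1
        rw [x_mul_cons (y * g) (by rw [h2]; simp)]
        intro hc
        rcases head?_of_P hc with h | h <;> simp at h
    have hw : (x⁻¹ * ((av n)⁻¹ * (x * (y * g)))).toWord
        = xm :: ((av n)⁻¹ * (x * (y * g))).toWord := by
      apply xinv_mul_cons
      rcases head?_of_Q key with h | h <;> rw [h] <;> simp
    rw [hw]
    show xm :: Qt n <+: xm :: ((av n)⁻¹ * (x * (y * g))).toWord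
    exact List.cons_prefix_cons.mpr ⟨rfl, (Qt_prefix_Qw n).trans key⟩

/-! ### Incomparability of the patterns -/

lemma P_prefix_P : ∀ m n, Pw m <+: Pw n → m = n := by
  intro m
  induction m with
  | zero =>
    intro n h
    cases n with
    | zero => rfl
    | succ n =>
      exfalso
      rw [show Pw 0 = [yp] from rfl, show Pw (n + 1) = ym :: xm :: Pw n from rfl] at h
      have := (List.cons_prefix_cons.mp h).1
      simp at this
  | succ m ih =>
    intro n h
    cases n with
    | zero =>
      exfalso
      rw [show Pw (m + 1) = ym :: xm :: Pw m from rfl, show Pw 0 = [yp] from rfl] at h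
      have := (List.cons_prefix_cons.mp h).1
      simp at this
    | succ n =>
      rw [show Pw (m + 1) = ym :: xm :: Pw m from rfl,
        show Pw (n + 1) = ym :: xm :: Pw n from rfl] at h
      have h2 := (List.cons_prefix_cons.mp (List.cons_prefix_cons.mp h).2).2
      rw [ih n h2]

lemma Qt_prefix_Qt : ∀ m n, Qt m <+: Qt n → m = n := by
  intro m
  induction m with
  | zero =>
    intro n h
    cases n with
    | zero => rfl
    | succ n =>
      exfalso
      rw [show Qt 0 = [ym] from rfl, Qt_succ] at h
      have := (List.cons_prefix_cons.mp h).1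
      simp at this
  | succ m ih =>
    intro n h
    cases n with
    | zero =>
      exfalso
      rw [Qt_succ, show Qt 0 = [ym] from rfl] at h
      have := (List.cons_prefix_cons.mp h).1
      simp at this
    | succ n =>
      rw [Qt_succ, Qt_succ] at h
      rw [ih n (List.cons_prefix_cons.mp h).2]

lemma Q_prefix_Q : ∀ m n, Qw m <+: Qw n → m = n := by
  intro m n h
  cases m with
  | zero =>
    cases n with
    | zero => rfl
    | succ n =>
      exfalso
      rw [show Qw 0 = ym :: [ym] from rfl, show Qw (n + 1) = xm :: Qt n from rfl] at h
      have := (List.cons_prefix_cons.mp h).1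
      simp at this
  | succ m =>
    cases n with
    | zero =>
      exfalso
      rw [show Qw (m + 1) = xm :: Qt m from rfl, show Qw 0 = ym :: [ym] from rfl] at h
      have := (List.cons_prefix_cons.mp h).1
      simp at this
    | succ n =>
      rw [show Qw (m + 1) = xm :: Qt m from rfl, show Qw (n + 1) = xm :: Qt n from rfl] at h
      rw [Qt_prefix_Qt m n (List.cons_prefix_cons.mp h).2]

lemma not_P_prefix_Q : ∀ m n, ¬ (Pw m <+: Qw n) := by
  intro m n h
  cases m with
  | zero =>
    rcases head?_of_Q (l := Qw n) List.prefix_rfl with hq | hq <;>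
      · have := head?_of_prefix (c := yp) (p := []) h
        rw [this] at hq; simp at hq
  | succ m =>
    cases n with
    | zero =>
      rw [show Pw (m + 1) = ym :: xm :: Pw m from rfl, show Qw 0 = ym :: [ym] from rfl] at h
      have h2 := (List.cons_prefix_cons.mp h).2
      have := head?_of_prefix h2
      simp at this
    | succ n =>
      rw [show Pw (m + 1) = ym :: xm :: Pw m from rfl, show Qw (n + 1) = xm :: Qt n from rfl] at h
      have := (List.cons_prefix_cons.mp h).1
      simp at this

lemma not_Q_prefix_P : ∀ m n, ¬ (Qw n <+: Pw m) := by
  intro m n h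
  cases m with
  | zero =>
    rcases head?_of_Q h with hq | hq <;> · rw [show Pw 0 = [yp] from rfl] at hq; simp at hq
  | succ m =>
    cases n with
    | zero =>
      rw [show Qw 0 = ym :: [ym] from rfl, show Pw (m + 1) = ym :: xm :: Pw m from rfl] at h
      have h2 := (List.cons_prefix_cons.mp h).2
      have := head?_of_prefix h2
      simp at this
    | succ n =>
      rw [show Qw (n + 1) = xm :: Qt n from rfl, show Pw (m + 1) = ym :: xm :: Pw m from rfl] at h
      have := (List.cons_prefix_cons.mp h).1
      simp at this

lemma Qw_ne_nil (n : ℕ) : Qw n ≠ [] := by cases n <;> simp [Qw]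

/-! ### Main theorem -/

theorem stmt_14 (k : ℕ) (hk : 2 ≤ k) :
    Function.Injective (FreeGroup.lift fun i : Fin k => α ((i : ℕ) + 1)) := by
  haveI : Nontrivial (Fin k) := by
    refine ⟨⟨0, by omega⟩, ⟨1, by omega⟩, ?_⟩
    intro hc
    have := Fin.mk.injEq (n := k) 0 (by omega) 1 (by omega) ▸ hc
    simp [Fin.ext_iff] at hc
  have hfun : (fun i : Fin k => α ((i : ℕ) + 1)) = fun i : Fin k => av (i : ℕ) := by
    funext i
    simp [α, av]
  rw [hfun]
  apply FreeGroup.injective_lift_of_ping_pong (fun i : Fin k => av (i : ℕ))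
    (X := fun i : Fin k => {g : F2 | Pw (i : ℕ) <+: g.toWord})
    (Y := fun i : Fin k => {g : F2 | Qw (i : ℕ) <+: g.toWord})
  · -- nonempty
    intro i
    refine ⟨av (i : ℕ) * 1, ?_⟩
    apply claimA
    intro hc
    rw [FreeGroup.toWord_one] at hc
    exact Qw_ne_nil _ (List.prefix_nil.mp hc)
  · -- X pairwise disjoint
    intro i j hij
    rw [Function.onFun, Set.disjoint_left]
    intro g hgi hgj
    rcases List.prefix_or_prefix_of_prefix hgi hgj with h | h
    · exact hij (Fin.ext (P_prefix_P _ _ h))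
    · exact hij (Fin.ext (P_prefix_P _ _ h).symm)
  · -- Y pairwise disjoint
    intro i j hij
    rw [Function.onFun, Set.disjoint_left]
    intro g hgi hgj
    rcases List.prefix_or_prefix_of_prefix hgi hgj with h | h
    · exact hij (Fin.ext (Q_prefix_Q _ _ h))
    · exact hij (Fin.ext (Q_prefix_Q _ _ h).symm)
  · -- X i disjoint Y j
    intro i j
    rw [Set.disjoint_left]
    intro g hgi hgj
    rcases List.prefix_or_prefix_of_prefix hgi hgj with h | h
    · exact not_P_prefix_Q _ _ h
    · exact not_Q_prefix_P _ _ h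
  · -- a i • (Y i)ᶜ ⊆ X i
    intro i g hg
    obtain ⟨h, hh, rfl⟩ := hg
    exact claimA _ h hh
  · -- (a i)⁻¹ • (X i)ᶜ ⊆ Y i
    intro i g hg
    obtain ⟨h, hh, rfl⟩ := hg
    exact claimB _ h hh

end Stmt14
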